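/- For every n-dimensional USO K (as a set of strings in {0,1,2,3}^n) there exists a generalized rewriting rule with 2 labels, using as sets the four subsets V_3, V_2, V_1, V_0 of {0,1,2,3}^{n-1} of prefixes of strings of K ending in 3, 2, 1, 0 respectively (assigned as S^(0)_1 = V_3, S^(2)_1 = V_2, S^(0)_2 = V_1, S^(2)_2 = V_0, with S^(1)_j = ∅ and S^(3)_j the canonical (n-1)-dimensional USO), such that applying it to the 2-dimensional bow {01, 20, 03, 22} with labelling L(01)=2, L(03)=1, L(20)=2, L(22)=1 at dimension h=1 yields exactly K. -/

import Mathlib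

/-- Strings `v` and `w` differ by exactly 2 in coordinate `i`. -/
def Diff2At (v w : List (Fin 4)) (i : ℕ) : Prop :=
  (v.getD i 0 : ℕ) = (w.getD i 0 : ℕ) + 2 ∨ (w.getD i 0 : ℕ) = (v.getD i 0 : ℕ) + 2

/-- A set of strings in `{0,1,2,3}^n` represents an `n`-dimensional USO
(a `4ℤ^n`-periodic cube tiling): all strings have length `n`, there are `2^n`
of them, and any two distinct ones differ by exactly 2 in some coordinate. -/
def IsUSOSet (n : ℕ) (K : Finset (List (Fin 4))) : Prop :=
  (∀ v ∈ K, v.length = n) ∧ K.card = 2 ^ n ∧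
    ∀ v ∈ K, ∀ w ∈ K, v ≠ w → ∃ i : ℕ, i < n ∧ Diff2At v w i

/-- Replace the entry of `v` at (0-indexed) position `h` by the string `s`. -/
def splice (v : List (Fin 4)) (h : ℕ) (s : List (Fin 4)) : List (Fin 4) :=
  v.take h ++ s ++ v.drop (h + 1)

/-- A simple rewriting rule `(S⁽⁰⁾, S⁽¹⁾, S⁽²⁾, S⁽³⁾)` with target dimension `d`. -/
def IsSimpleRule (d : ℕ) (S : Fin 4 → Finset (List (Fin 4))) : Prop :=
  Disjoint (S 0) (S 2) ∧ IsUSOSet d (S 0 ∪ S 2) ∧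
    Disjoint (S 1) (S 3) ∧ IsUSOSet d (S 1 ∪ S 3)

/-- Applying a simple rewriting rule at (0-indexed) dimension `h`:
`S_h(K) = ⋃_{v ∈ K} { v₁…v_{h-1} s v_{h+1}…v_k : s ∈ S^(v_h) }`. -/
def rewriteSet (S : Fin 4 → Finset (List (Fin 4))) (h : ℕ)
    (K : Finset (List (Fin 4))) : Finset (List (Fin 4)) :=
  K.biUnion fun v => (S (v.getD h 0)).image (splice v h)

/-- A generalized rewriting rule with labels in `Fin i` and target dimension `d`. -/
def IsGenRule (d i : ℕ) (S : Fin 4 → Fin i → Finset (List (Fin 4))) : Prop :=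
  (∀ j j' : Fin i, Disjoint (S 0 j) (S 2 j') ∧ IsUSOSet d (S 0 j ∪ S 2 j')) ∧
    (∀ j j' : Fin i, Disjoint (S 1 j) (S 3 j') ∧ IsUSOSet d (S 1 j ∪ S 3 j'))

/-- Applying a generalized rewriting rule at (0-indexed) dimension `h` to the
labelled USO `(K, L)`:
`T_h(K, L) = ⋃_{v ∈ K} { v₁…v_{h-1} t v_{h+1}…v_k : t ∈ S^(v_h)_{L(v)} }`. -/
def genRewrite {i : ℕ} (S : Fin 4 → Fin i → Finset (List (Fin 4)))
    (L : List (Fin 4) → Fin i) (h : ℕ) (K : Finset (List (Fin 4))) :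
    Finset (List (Fin 4)) :=
  K.biUnion fun v => (S (v.getD h 0) (L v)).image (splice v h)

/-- `V_m`: the set of prefixes (of length `n-1`) of the strings of `K`
whose last coordinate is `m`. -/
def Vm (n : ℕ) (K : Finset (List (Fin 4))) (m : Fin 4) : Finset (List (Fin 4)) :=
  (K.filter fun v => v.getD (n - 1) 0 = m).image fun v => v.take (n - 1)

/-- The canonical `d`-dimensional USO `{0,2}^d` (all edges downwards). -/
def canonicalUSO (d : ℕ) : Finset (List (Fin 4)) :=
  (Finset.univ : Finset (Fin d → Bool)).image fun f =>
    (List.ofFn f).map fun b => if b then (2 : Fin 4) else 0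

/-- The 2-dimensional bow `{01, 20, 03, 22}`. -/
def bow : Finset (List (Fin 4)) := {[0, 1], [2, 0], [0, 3], [2, 2]}

/-- The labelling `L(01) = 2, L(20) = 2, L(03) = 1, L(22) = 1`
(label `1` is `(0 : Fin 2)`, label `2` is `(1 : Fin 2)`). -/
def bowL : List (Fin 4) → Fin 2 :=
  fun v => if v = [0, 1] ∨ v = [2, 0] then 1 else 0

/-- The sets of the universality rewriting rule:
`S⁽⁰⁾₁ = V₃`, `S⁽²⁾₁ = V₂`, `S⁽⁰⁾₂ = V₁`, `S⁽²⁾₂ = V₀`,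
`S⁽¹⁾ⱼ = ∅`, `S⁽³⁾ⱼ` the canonical `(n-1)`-dimensional USO. -/
def univRule (n : ℕ) (K : Finset (List (Fin 4))) :
    Fin 4 → Fin 2 → Finset (List (Fin 4)) :=
  fun m j =>
    if m = 0 then (if j = 0 then Vm n K 3 else Vm n K 1)
    else if m = 2 then (if j = 0 then Vm n K 2 else Vm n K 0)
    else if m = 1 then ∅
    else canonicalUSO (n - 1)

/-! Let `Kₘ` be the set of strings of `K` ending in `m`, so that `|Vₘ| = |Kₘ|` and the `|Kₘ|`
add up to `2ⁿ`. If the letters `p` and `q` do not differ by 2, two distinct strings of `Kₚ ∪ K_q`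
must differ by 2 in one of their first `n - 1` coordinates; hence `Vₚ` and `V_q` are disjoint and
`Vₚ ∪ V_q` is a set of strings of length `n - 1` pairwise differing by 2 somewhere, which has at
most `2ⁿ⁻¹` elements (by induction on the length). The four bounds
for `{p, q} = {3, 2}, {1, 0}, {3, 0}, {1, 2}` add up to the total `2ⁿ`, so all of them are
equalities and the four unions are USOs. Finally, rewriting the bow `{01, 20, 03, 22}` in its
first coordinate appends its second letter `m` to the strings of `Vₘ`, which gives back `K`. -/

def Diff2 (a b : Fin 4) : Prop := (a : ℕ) = b + 2 ∨ (b : ℕ) = a + 2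

instance : DecidableRel Diff2 := fun _ _ => inferInstanceAs (Decidable (_ ∨ _))

theorem diff2At_iff {v w : List (Fin 4)} {i : ℕ} :
    Diff2At v w i ↔ Diff2 (v.getD i 0) (w.getD i 0) := Iff.rfl

theorem Diff2.symm {a b : Fin 4} (h : Diff2 a b) : Diff2 b a := Or.symm h

theorem not_diff2_self (a : Fin 4) : ¬ Diff2 a a := by unfold Diff2; omega

theorem diff2At_succ (v w : List (Fin 4)) (i : ℕ) :
    Diff2At v w (i + 1) ↔ Diff2At v.tail w.tail i := by
  cases v <;> cases w <;> simp [Diff2At]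

def IsDiff2Clique (d : ℕ) (A : Finset (List (Fin 4))) : Prop :=
  (∀ v ∈ A, v.length = d) ∧ ∀ v ∈ A, ∀ w ∈ A, v ≠ w → ∃ i < d, Diff2At v w i

theorem isUSOSet_iff {d : ℕ} {A : Finset (List (Fin 4))} :
    IsUSOSet d A ↔ IsDiff2Clique d A ∧ A.card = 2 ^ d := by
  unfold IsUSOSet IsDiff2Clique
  tauto

namespace IsDiff2Clique

variable {d : ℕ} {A B : Finset (List (Fin 4))}

theorem mono (hA : IsDiff2Clique d A) (hBA : B ⊆ A) : IsDiff2Clique d B :=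
  ⟨fun v hv => hA.1 v (hBA hv), fun v hv w hw => hA.2 v (hBA hv) w (hBA hw)⟩

theorem image_tail (hA : IsDiff2Clique (d + 1) A)
    (h0 : ∀ v ∈ A, ∀ w ∈ A, ¬ Diff2At v w 0) :
    IsDiff2Clique d (A.image List.tail) ∧ (A.image List.tail).card = A.card := by
  have hinj : Set.InjOn List.tail (A : Set (List (Fin 4))) := by
    intro v hv w hw htail
    by_contra hne
    obtain ⟨_ | i, -, hi⟩ := hA.2 v hv w hw hne
    · exact h0 v hv w hw hi
    · rw [diff2At_succ, htail, diff2At_iff] at hi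
      exact not_diff2_self _ hi
  refine ⟨⟨?_, ?_⟩, Finset.card_image_of_injOn hinj⟩
  · simp only [Finset.mem_image, forall_exists_index, and_imp]
    rintro _ v hv rfl
    simp [hA.1 v hv]
  · simp only [Finset.mem_image, forall_exists_index, and_imp]
    rintro _ v hv rfl _ w hw rfl hne
    obtain ⟨_ | i, hi, hvw⟩ := hA.2 v hv w hw (by rintro rfl; exact hne rfl)
    · exact absurd hvw (h0 v hv w hw)
    · exact ⟨i, by omega, (diff2At_succ v w i).1 hvw⟩

theorem card_le (hA : IsDiff2Clique d A) : A.card ≤ 2 ^ d := by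
  induction d generalizing A with
  | zero =>
    have hsub : A ⊆ {[]} := fun v hv => by simpa using hA.1 v hv
    simpa using Finset.card_le_card hsub
  | succ d ih =>
    -- Within either half no two strings differ by 2 in the first coordinate, so it can be dropped.
    have half (B : Finset (List (Fin 4))) (hBA : B ⊆ A)
        (h0 : ∀ v ∈ B, ∀ w ∈ B, ¬ Diff2At v w 0) : B.card ≤ 2 ^ d := by
      obtain ⟨hclique, hcard⟩ := (hA.mono hBA).image_tail h0
      exact hcard ▸ ih hclique
    have hlow := half (A.filter fun v => (v.getD 0 0 : ℕ) < 2) (Finset.filter_subset _ _)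
      (by simp only [Finset.mem_filter, Diff2At]; omega)
    have hhigh := half (A.filter fun v => ¬ (v.getD 0 0 : ℕ) < 2) (Finset.filter_subset _ _)
      (by simp only [Finset.mem_filter, Diff2At]; omega)
    rw [← Finset.card_filter_add_card_filter_not (fun v => (v.getD 0 0 : ℕ) < 2), pow_succ]
    omega

end IsDiff2Clique

theorem isUSOSet_canonicalUSO (d : ℕ) : IsUSOSet d (canonicalUSO d) := by
  set g : Bool → Fin 4 := fun b => if b then 2 else 0
  have hg : Function.Injective g := by decide
  have hdiff2 : ∀ b c : Bool, b ≠ c → Diff2 (g b) (g c) := by decide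
  refine ⟨?_, ?_, ?_⟩
  · simp [canonicalUSO]
  · rw [canonicalUSO, Finset.card_image_of_injective _
      fun f f' h => List.ofFn_injective (List.map_injective_iff.mpr hg h)]
    simp
  · simp only [canonicalUSO, Finset.mem_image, Finset.mem_univ, true_and]
    rintro _ ⟨f, rfl⟩ _ ⟨f', rfl⟩ hne
    obtain ⟨i, hi⟩ : ∃ i, f i ≠ f' i := Function.ne_iff.mp fun h => hne (by rw [h])
    refine ⟨i, i.isLt, ?_⟩
    rw [diff2At_iff, List.getD_eq_getElem _ _ (by simp), List.getD_eq_getElem _ _ (by simp)]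
    simpa using hdiff2 _ _ hi

theorem take_append_getD_of_length_eq_succ {d : ℕ} {v : List (Fin 4)} (hv : v.length = d + 1) :
    v.take d ++ [v.getD d 0] = v := by
  rw [List.getD_eq_getElem _ _ (by omega), ← List.take_succ_eq_append_getElem (by omega),
    ← hv, List.take_length]

theorem getD_append_singleton_of_length_eq {x : List (Fin 4)} {i : ℕ} (hi : x.length = i)
    (a : Fin 4) : (x ++ [a]).getD i 0 = a := by
  subst hi
  simp

section Facets

variable {d : ℕ} {K : Finset (List (Fin 4))}

theorem mem_Vm_iff (hlen : ∀ v ∈ K, v.length = d + 1) {m : Fin 4} {x : List (Fin 4)} :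
    x ∈ Vm (d + 1) K m ↔ x ++ [m] ∈ K ∧ x.length = d := by
  simp only [Vm, Nat.add_sub_cancel, Finset.mem_image, Finset.mem_filter]
  constructor
  · rintro ⟨v, ⟨hv, rfl⟩, rfl⟩
    rw [take_append_getD_of_length_eq_succ (hlen v hv)]
    simp [hv, hlen v hv]
  · rintro ⟨hx, rfl⟩
    exact ⟨x ++ [m], ⟨hx, getD_append_singleton_of_length_eq rfl m⟩, by simp⟩

theorem exists_mem_Vm_append_eq_iff (hlen : ∀ v ∈ K, v.length = d + 1) {x : List (Fin 4)} :
    (∃ m, ∃ y ∈ Vm (d + 1) K m, y ++ [m] = x) ↔ x ∈ K := by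
  simp only [mem_Vm_iff hlen]
  constructor
  · rintro ⟨m, y, ⟨hy, -⟩, rfl⟩
    exact hy
  · intro hx
    have hxK := take_append_getD_of_length_eq_succ (hlen x hx)
    exact ⟨_, _, ⟨by rwa [hxK], by simp [hlen x hx]⟩, hxK⟩

theorem sum_card_Vm (hlen : ∀ v ∈ K, v.length = d + 1) :
    ∑ m, (Vm (d + 1) K m).card = K.card := by
  rw [Finset.card_eq_sum_card_fiberwise (f := fun v => v.getD d 0) (t := Finset.univ)
    (fun _ _ => Finset.mem_univ _)]
  refine Finset.sum_congr rfl fun m _ => Finset.card_image_of_injOn ?_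
  intro v hv w hw htake
  simp only [Nat.add_sub_cancel, Finset.coe_filter, Set.mem_ofPred_eq] at hv hw htake
  rw [← take_append_getD_of_length_eq_succ (hlen v hv.1),
    ← take_append_getD_of_length_eq_succ (hlen w hw.1), hv.2, hw.2, htake]

theorem exists_diff2At_of_append_mem (hK : IsDiff2Clique (d + 1) K) {x y : List (Fin 4)}
    {a b : Fin 4} (hx : x ++ [a] ∈ K) (hy : y ++ [b] ∈ K) (hxl : x.length = d)
    (hyl : y.length = d) (hab : ¬ Diff2 a b) (hne : x ++ [a] ≠ y ++ [b]) :
    ∃ i < d, Diff2At x y i := by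
  obtain ⟨i, hi, hxy⟩ := hK.2 _ hx _ hy hne
  rcases (Nat.lt_succ_iff_lt_or_eq.mp hi) with hi | rfl
  · refine ⟨i, hi, ?_⟩
    rwa [Diff2At, List.getD_append _ _ _ _ (by omega),
      List.getD_append _ _ _ _ (by omega)] at hxy
  · rw [diff2At_iff, getD_append_singleton_of_length_eq hxl,
      getD_append_singleton_of_length_eq hyl] at hxy
    exact absurd hxy hab

theorem disjoint_Vm (hK : IsDiff2Clique (d + 1) K) {a b : Fin 4} (hab : ¬ Diff2 a b)
    (hne : a ≠ b) : Disjoint (Vm (d + 1) K a) (Vm (d + 1) K b) := by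
  rw [Finset.disjoint_left]
  intro x hxa hxb
  rw [mem_Vm_iff hK.1] at hxa hxb
  obtain ⟨i, -, hi⟩ := exists_diff2At_of_append_mem hK hxa.1 hxb.1 hxa.2 hxb.2 hab
    (by simpa using hne)
  exact not_diff2_self _ hi

theorem isDiff2Clique_Vm_union (hK : IsDiff2Clique (d + 1) K) {a b : Fin 4}
    (hab : ¬ Diff2 a b) : IsDiff2Clique d (Vm (d + 1) K a ∪ Vm (d + 1) K b) := by
  have hletters : ∀ p ∈ ({a, b} : Set (Fin 4)), ∀ q ∈ ({a, b} : Set (Fin 4)), ¬ Diff2 p q := by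
    rintro p (rfl | rfl) q (rfl | rfl)
    exacts [not_diff2_self _, hab, fun h => hab h.symm, not_diff2_self _]
  have hmem : ∀ x ∈ Vm (d + 1) K a ∪ Vm (d + 1) K b,
      ∃ p ∈ ({a, b} : Set (Fin 4)), x ++ [p] ∈ K ∧ x.length = d := by
    intro x hx
    rcases Finset.mem_union.mp hx with hx | hx
    · exact ⟨a, by simp, (mem_Vm_iff hK.1).mp hx⟩
    · exact ⟨b, by simp, (mem_Vm_iff hK.1).mp hx⟩
  refine ⟨fun x hx => by obtain ⟨-, -, -, hxl⟩ := hmem x hx; exact hxl,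
    fun x hx y hy hxy => ?_⟩
  obtain ⟨p, hp, hxK, hxl⟩ := hmem x hx
  obtain ⟨q, hq, hyK, hyl⟩ := hmem y hy
  exact exists_diff2At_of_append_mem hK hxK hyK hxl hyl (hletters p hp q hq)
    fun h => hxy (List.append_inj_left h (hxl.trans hyl.symm))

theorem card_Vm_add_card_Vm (hK : IsUSOSet (d + 1) K) {a b : Fin 4} (hab : ¬ Diff2 a b)
    (hne : a ≠ b) : (Vm (d + 1) K a).card + (Vm (d + 1) K b).card = 2 ^ d := by
  obtain ⟨hclique, hcard⟩ := isUSOSet_iff.mp hK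
  have hle {p q : Fin 4} (hpq : ¬ Diff2 p q) (hne : p ≠ q) :
      (Vm (d + 1) K p).card + (Vm (d + 1) K q).card ≤ 2 ^ d := by
    rw [← Finset.card_union_of_disjoint (disjoint_Vm hclique hpq hne)]
    exact (isDiff2Clique_Vm_union hclique hpq).card_le
  have hsum := sum_card_Vm hclique.1
  rw [Fin.sum_univ_four, hcard, pow_succ] at hsum
  have h32 := hle (p := 3) (q := 2) (by decide) (by decide)
  have h10 := hle (p := 1) (q := 0) (by decide) (by decide)
  have h30 := hle (p := 3) (q := 0) (by decide) (by decide)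
  have h12 := hle (p := 1) (q := 2) (by decide) (by decide)
  fin_cases a <;> fin_cases b <;> first
    | (exfalso; revert hab hne; decide)
    | (simp only [Fin.reduceFinMk, Fin.isValue] at *; omega)

theorem isUSOSet_Vm_union (hK : IsUSOSet (d + 1) K) {a b : Fin 4} (hab : ¬ Diff2 a b)
    (hne : a ≠ b) : IsUSOSet d (Vm (d + 1) K a ∪ Vm (d + 1) K b) := by
  obtain ⟨hclique, -⟩ := isUSOSet_iff.mp hK
  refine isUSOSet_iff.mpr ⟨isDiff2Clique_Vm_union hclique hab, ?_⟩
  rw [Finset.card_union_of_disjoint (disjoint_Vm hclique hab hne), card_Vm_add_card_Vm hK hab hne]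

theorem isGenRule_univRule (hK : IsUSOSet (d + 1) K) :
    IsGenRule d 2 (univRule (d + 1) K) := by
  refine ⟨fun j j' => ?_, fun _ _ => ?_⟩
  · fin_cases j <;> fin_cases j' <;>
      exact ⟨disjoint_Vm (isUSOSet_iff.mp hK).1 (by decide) (by decide),
        isUSOSet_Vm_union hK (by decide) (by decide)⟩
  · simpa [univRule] using isUSOSet_canonicalUSO d

theorem genRewrite_univRule_bow (hlen : ∀ v ∈ K, v.length = d + 1) :
    genRewrite (univRule (d + 1) K) bowL 0 bow = K := by
  ext x
  rw [← exists_mem_Vm_append_eq_iff hlen]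
  simp only [genRewrite, bow, Finset.biUnion_insert, Finset.singleton_biUnion,
    Finset.mem_union, Finset.mem_image]
  constructor
  · rintro (h | h | h | h)
    exacts [⟨1, h⟩, ⟨0, h⟩, ⟨3, h⟩, ⟨2, h⟩]
  · rintro ⟨m, h⟩
    fin_cases m
    exacts [Or.inr (Or.inl h), Or.inl h, Or.inr (Or.inr (Or.inr h)), Or.inr (Or.inr (Or.inl h))]

end Facets

/-- Universality: every `n`-dimensional USO `K` arises from the bow by a
generalized rewriting rule with 2 labels built from the facet-prefix sets of `K`. -/
theorem stmt11 (n : ℕ) (hn : 1 ≤ n) (K : Finset (List (Fin 4)))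
    (hK : IsUSOSet n K) :
    IsGenRule (n - 1) 2 (univRule n K) ∧
      genRewrite (univRule n K) bowL 0 bow = K := by
  obtain ⟨d, rfl⟩ := Nat.exists_eq_add_of_le' hn
  exact ⟨isGenRule_univRule hK, genRewrite_univRule_bow hK.1⟩
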